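/- Let T be a unitary operator on a Hilbert space H that is almost weakly stable (every orbit converges weakly to 0 along a set of indices of density 1). Then for every h ∈ H and every nonconstant polynomial p with integer coefficients mapping ℕ⁺ into ℕ, the sequence (T^{p(n)} h)_{n≥1} is almost weakly stable. -/

import Mathlib

/-!
Bounded sequences `u` in a Hilbert space are almost weakly stable exactly when every
`n ↦ ‖⟪y, u n⟫‖` has Cesàro averages tending to zero (Koopman–von Neumann, plus a diagonal
argument over the countably many vectors `u j` and orthogonal projection onto their closed
span). So it suffices to show Cesàro nullity of `‖⟪y, U^{q(n)} x⟫‖` for every `q` with positive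
leading coefficient, by induction on the degree. Degree one is a dilation and shift of the
hypothesis on `U`. In higher degree, van der Corput's inequality reduces the claim to the
correlations `⟪U^{q(n+m)} x, U^{q(n+m')} x⟫ = ⟪U^{r(n)} x, x⟫` with
`r = q(X + m) - q(X + m')`, whose degree is one less.
-/

open Filter Polynomial
open scoped InnerProductSpace

def HasDensity (S : Set ℕ) (d : ℝ) : Prop :=
  Tendsto (fun N : ℕ => (∑ k ∈ Finset.Icc 1 N, Set.indicator S (fun _ => (1 : ℝ)) k) / N)
    atTop (nhds d)

open Asymptotics Finset
open scoped Topology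

lemma sum_Icc_one_eq_sum_range {M : Type*} [AddCommMonoid M] (f : ℕ → M) (N : ℕ) :
    ∑ k ∈ Icc 1 N, f k = ∑ k ∈ range N, f (k + 1) := by
  rw [range_eq_Ico, sum_Ico_add']
  rfl

lemma sum_Icc_one_sub_sum_Icc_one {G : Type*} [AddCommGroup G] (f : ℕ → G) (N : ℕ) :
    ∑ n ∈ Icc 1 N, f (n + 1) - ∑ n ∈ Icc 1 N, f n = f (N + 1) - f 1 := by
  rw [← sum_sub_distrib, sum_Icc_one_eq_sum_range, sum_range_sub (fun k => f (k + 1))]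

/-- The Cesàro averages `N⁻¹ ∑_{k=1}^N f k` tend to `0` (`cesaroNull_iff_tendsto`); the
little-o form gives access to the `Asymptotics` API. -/
def CesaroNull (f : ℕ → ℝ) : Prop :=
  (fun N : ℕ => ∑ k ∈ Icc 1 N, f k) =o[atTop] (fun N : ℕ => (N : ℝ))

namespace CesaroNull

variable {f g : ℕ → ℝ}

lemma eventually_sum_le (hf : CesaroNull f) {ε : ℝ} (hε : 0 < ε) :
    ∀ᶠ N : ℕ in atTop, ∑ k ∈ Icc 1 N, f k ≤ ε * N := by
  filter_upwards [hf.bound hε] with N hN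
  simpa using (le_abs_self _).trans hN

lemma of_eventually_sum_le (hf0 : ∀ n, 0 ≤ f n)
    (h : ∀ ε > 0, ∀ᶠ N : ℕ in atTop, ∑ k ∈ Icc 1 N, f k ≤ ε * N) : CesaroNull f :=
  IsLittleO.of_bound fun ε hε => (h ε hε).mono fun N hN => by
    rwa [Real.norm_of_nonneg (sum_nonneg fun k _ => hf0 k), Real.norm_natCast]

lemma mono (hg : CesaroNull g) (hf0 : ∀ n, 0 ≤ f n) (hfg : ∀ n, f n ≤ g n) : CesaroNull f := by
  refine (isBigO_of_le _ fun N => ?_).trans_isLittleO hg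
  have hf : 0 ≤ ∑ k ∈ Icc 1 N, f k := sum_nonneg fun k _ => hf0 k
  have hsum : ∑ k ∈ Icc 1 N, f k ≤ ∑ k ∈ Icc 1 N, g k := sum_le_sum fun k _ => hfg k
  rw [Real.norm_of_nonneg hf, Real.norm_of_nonneg (hf.trans hsum)]
  exact hsum

lemma add (hf : CesaroNull f) (hg : CesaroNull g) : CesaroNull (fun n => f n + g n) := by
  simpa only [CesaroNull, sum_add_distrib] using IsLittleO.add hf hg

lemma const_mul (hf : CesaroNull f) (c : ℝ) : CesaroNull (fun n => c * f n) := by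
  simpa only [CesaroNull, ← mul_sum] using hf.const_mul_left c

lemma sum {ι : Type*} {s : Finset ι} {F : ι → ℕ → ℝ} (hF : ∀ i ∈ s, CesaroNull (F i)) :
    CesaroNull (fun n => ∑ i ∈ s, F i n) := by
  unfold CesaroNull
  simp_rw [sum_comm (s := Icc 1 _)]
  exact IsLittleO.fun_sum hF

lemma congr' (hg : CesaroNull g) (hfg : f =ᶠ[atTop] g) : CesaroNull f := by
  obtain ⟨n₀, hn₀⟩ := eventually_atTop.mp hfg
  have hconst : (fun _ : ℕ => ∑ k ∈ Icc 1 n₀, (f k - g k)) =o[atTop] (fun N : ℕ => (N : ℝ)) :=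
    isLittleO_const_left.2 <| Or.inr <| tendsto_norm_atTop_atTop.comp tendsto_natCast_atTop_atTop
  refine (IsLittleO.add hg hconst).congr' ?_ EventuallyEq.rfl
  filter_upwards [eventually_ge_atTop n₀] with N hN
  have hhead : ∑ k ∈ Icc 1 N, (f k - g k) = ∑ k ∈ Icc 1 n₀, (f k - g k) := by
    refine (sum_subset (Icc_subset_Icc_right hN) fun k hk hk' => ?_).symm
    simp only [mem_Icc, not_and, not_le] at hk hk'
    rw [hn₀ k (hk' hk.1).le, sub_self]
  rw [← hhead, sum_sub_distrib]
  ring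

lemma of_tendsto (hf : Tendsto f atTop (𝓝 0)) : CesaroNull f := by
  simpa only [CesaroNull, sum_Icc_one_eq_sum_range] using
    isLittleO_sum_range_of_tendsto_zero ((tendsto_add_atTop_iff_nat 1).2 hf)

lemma of_sq (hf0 : ∀ n, 0 ≤ f n) (h : CesaroNull (fun n => f n ^ 2)) : CesaroNull f := by
  refine of_eventually_sum_le hf0 fun ε hε => ?_
  filter_upwards [h.eventually_sum_le (pow_pos hε 2)] with N hN
  refine le_of_pow_le_pow_left₀ two_ne_zero (by positivity) ?_
  calc (∑ k ∈ Icc 1 N, f k) ^ 2 ≤ N * ∑ k ∈ Icc 1 N, f k ^ 2 := by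
        simpa using sq_sum_le_card_mul_sum_sq (s := Icc 1 N) (f := f)
    _ ≤ N * (ε ^ 2 * N) := by gcongr
    _ = (ε * N) ^ 2 := by ring

lemma comp_mul (hg0 : ∀ n, 0 ≤ g n) (hg : CesaroNull g) {a : ℕ} (ha : 0 < a) :
    CesaroNull (fun n => g (a * n)) := by
  have hdil : (fun N : ℕ => ∑ k ∈ Icc 1 (a * N), g k) =o[atTop] (fun N : ℕ => (N : ℝ)) := by
    refine (hg.comp_tendsto (tendsto_id.const_mul_atTop' ha)).trans_isBigO ?_
    simpa only [Function.comp_def, id, Nat.cast_mul] using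
      (isBigO_refl (fun N : ℕ => (N : ℝ)) atTop).const_mul_left (a : ℝ)
  refine (isBigO_of_le _ fun N => ?_).trans_isLittleO hdil
  have hinj : Set.InjOn (a * ·) (Icc 1 N : Set ℕ) := fun m _ n _ h => Nat.eq_of_mul_eq_mul_left ha h
  have himage : (Icc 1 N).image (a * ·) ⊆ Icc 1 (a * N) := by
    intro k hk
    obtain ⟨n, hn, rfl⟩ := mem_image.1 hk
    simp only [mem_Icc] at hn ⊢
    exact ⟨Nat.mul_pos ha hn.1, Nat.mul_le_mul_left a hn.2⟩
  have hle : ∑ n ∈ Icc 1 N, g (a * n) ≤ ∑ k ∈ Icc 1 (a * N), g k := by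
    rw [← sum_image hinj]
    exact sum_le_sum_of_subset_of_nonneg himage fun k _ _ => hg0 k
  rw [Real.norm_of_nonneg (sum_nonneg fun n _ => hg0 _),
    Real.norm_of_nonneg (sum_nonneg fun k _ => hg0 k)]
  exact hle

lemma indicator_lt (hf0 : ∀ n, 0 ≤ f n) (hf : CesaroNull f) {ε : ℝ} (hε : 0 < ε) :
    CesaroNull ({n | ε < f n}.indicator 1) := by
  refine (hf.const_mul ε⁻¹).mono (Set.indicator_nonneg fun _ _ => zero_le_one) fun n => ?_
  by_cases hn : ε < f n
  · rw [Set.indicator_of_mem (s := {n | ε < f n}) hn, Pi.one_apply, ← div_eq_inv_mul, one_le_div hε]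
    exact hn.le
  · rw [Set.indicator_of_notMem (s := {n | ε < f n}) hn]
    exact mul_nonneg (inv_nonneg.2 hε.le) (hf0 n)

end CesaroNull

lemma cesaroNull_iff_tendsto {f : ℕ → ℝ} :
    CesaroNull f ↔ Tendsto (fun N : ℕ => (∑ k ∈ Icc 1 N, f k) / N) atTop (𝓝 0) :=
  isLittleO_iff_tendsto fun N hN => by simp [Nat.cast_eq_zero.1 hN]

lemma hasDensity_one_iff_cesaroNull_compl (S : Set ℕ) :
    HasDensity S 1 ↔ CesaroNull (Sᶜ.indicator 1) := by
  have hcompl : ∀ᶠ N : ℕ in atTop, (∑ k ∈ Icc 1 N, Sᶜ.indicator (1 : ℕ → ℝ) k) / N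
      = 1 - (∑ k ∈ Icc 1 N, S.indicator (fun _ => (1 : ℝ)) k) / N := by
    filter_upwards [eventually_gt_atTop 0] with N hN
    have htotal : ∑ k ∈ Icc 1 N, S.indicator (fun _ => (1 : ℝ)) k
        + ∑ k ∈ Icc 1 N, Sᶜ.indicator (1 : ℕ → ℝ) k = N := by
      rw [← sum_add_distrib]
      change ∑ k ∈ Icc 1 N, (S.indicator 1 k + Sᶜ.indicator 1 k) = (N : ℝ)
      simp [Set.indicator_self_add_compl_apply]
    field_simp
    linarith
  rw [cesaroNull_iff_tendsto, HasDensity]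
  constructor
  · intro h
    simpa using (tendsto_const_nhds.sub h).congr' (hcompl.mono fun N hN => hN.symm)
  · intro h
    simpa using (tendsto_const_nhds.sub h).congr' (hcompl.mono fun N hN => by rw [hN]; ring)

lemma HasDensity.cesaroNull_of_tendsto {S : Set ℕ} (hS : HasDensity S 1) {f : ℕ → ℝ} {B : ℝ}
    (hf0 : ∀ n, 0 ≤ f n) (hfB : ∀ n, f n ≤ B) (hf : Tendsto f (atTop ⊓ 𝓟 S) (𝓝 0)) :
    CesaroNull f := by
  have hS_indicator : Tendsto (S.indicator f) atTop (𝓝 0) := by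
    rw [← inf_top_eq atTop, ← principal_univ, ← Set.union_compl_self S, ← sup_principal,
      inf_sup_left, tendsto_sup]
    refine ⟨hf.congr' ?_, tendsto_const_nhds.congr' ?_⟩ <;>
      refine eventually_inf_principal.2 (Eventually.of_forall fun n hn => ?_)
    · exact (Set.indicator_of_mem hn f).symm
    · exact (Set.indicator_of_notMem hn f).symm
  refine ((CesaroNull.of_tendsto hS_indicator).add
    (((hasDensity_one_iff_cesaroNull_compl S).1 hS).const_mul B)).mono hf0 fun n => ?_
  by_cases hn : n ∈ S
  · simp [hn]
  · simp [hn, hfB n]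

lemma exists_cesaroNull_indicator_eventually_mem (T : ℕ → Set ℕ)
    (hT : ∀ i, CesaroNull ((T i).indicator 1)) :
    ∃ B : Set ℕ, CesaroNull (B.indicator 1) ∧ ∀ i, ∀ᶠ n in atTop, n ∈ T i → n ∈ B := by
  classical
  have hP : ∀ j, CesaroNull (fun n => ∑ i ∈ range (j + 1), (T i).indicator 1 n) :=
    fun j => CesaroNull.sum fun i _ => hT i
  choose ψ hψ using fun j => eventually_atTop.mp <|
    (eventually_ge_atTop j).and ((hP j).eventually_sum_le (pow_pos one_half_pos j))
  set B := ⋃ i, T i ∩ Set.Ici (ψ i)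
  refine ⟨B, CesaroNull.of_eventually_sum_le (Set.indicator_nonneg fun _ _ => zero_le_one)
    fun ε hε => ?_, fun i => ?_⟩
  · obtain ⟨J, hJ⟩ := exists_pow_lt_of_lt_one hε one_half_lt_one
    filter_upwards [eventually_ge_atTop (ψ J)] with N hN
    have hJN : J ≤ N := (hψ J N hN).1
    -- Up to `N`, the set `B` only meets those `T i` with `ψ i ≤ N`, hence with `i ≤ j`.
    set j := Nat.findGreatest (fun j => ψ j ≤ N) N
    have hJj : J ≤ j := Nat.le_findGreatest hJN hN
    have hjN : ψ j ≤ N := Nat.findGreatest_spec (P := fun j => ψ j ≤ N) hJN hN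
    have hB : ∀ k ∈ Icc 1 N,
        B.indicator 1 k ≤ ∑ i ∈ range (j + 1), (T i).indicator (1 : ℕ → ℝ) k := by
      intro k hk
      by_cases hkB : k ∈ B
      · obtain ⟨i, hki, hik⟩ : ∃ i, k ∈ T i ∧ ψ i ≤ k := by simpa [B] using hkB
        have hiN : ψ i ≤ N := hik.trans (mem_Icc.1 hk).2
        have hij : i ≤ j := Nat.le_findGreatest ((hψ i (ψ i) le_rfl).1.trans hiN) hiN
        rw [Set.indicator_of_mem hkB]
        refine le_of_eq_of_le (Set.indicator_of_mem hki 1).symm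
          (single_le_sum (f := fun i => (T i).indicator (1 : ℕ → ℝ) k) (fun i _ => ?_)
            (mem_range_succ_iff.2 hij))
        exact Set.indicator_nonneg (fun _ _ => zero_le_one) k
      · rw [Set.indicator_of_notMem hkB]
        exact sum_nonneg fun i _ => Set.indicator_nonneg (fun _ _ => zero_le_one) k
    calc ∑ k ∈ Icc 1 N, B.indicator 1 k
        ≤ ∑ k ∈ Icc 1 N, ∑ i ∈ range (j + 1), (T i).indicator 1 k := sum_le_sum hB
      _ ≤ (1 / 2) ^ j * N := (hψ j N hjN).2
      _ ≤ (1 / 2) ^ J * N := by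
        gcongr (?_ : ℝ) * _
        exact pow_le_pow_of_le_one (by norm_num) (by norm_num) hJj
      _ ≤ ε * N := by gcongr
  · filter_upwards [eventually_ge_atTop (ψ i)] with n hn hnT
    exact Set.mem_iUnion.2 ⟨i, hnT, hn⟩

lemma exists_hasDensity_one_forall_tendsto (f : ℕ → ℕ → ℝ) (hf0 : ∀ j n, 0 ≤ f j n)
    (hf : ∀ j, CesaroNull (f j)) :
    ∃ S : Set ℕ, HasDensity S 1 ∧ ∀ j, Tendsto (f j) (atTop ⊓ 𝓟 S) (𝓝 0) := by
  -- Enumerate the pairs `(j, i)` and collect the exceptional sets `{1 / (i + 1) < f j}`.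
  obtain ⟨B, hB, hTB⟩ := exists_cesaroNull_indicator_eventually_mem
    (fun k => {n | 1 / ((k.unpair.2 : ℝ) + 1) < f k.unpair.1 n})
    fun k => (hf _).indicator_lt (hf0 _) (by positivity)
  refine ⟨Bᶜ, (hasDensity_one_iff_cesaroNull_compl _).2 (by rwa [compl_compl]), fun j => ?_⟩
  refine Metric.tendsto_nhds.2 fun ε hε => ?_
  obtain ⟨i, hi⟩ := exists_nat_one_div_lt hε
  have hji := hTB (Nat.pair j i)
  simp only [Nat.unpair_pair] at hji
  rw [eventually_inf_principal]
  filter_upwards [hji] with n hn hnB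
  rw [Real.dist_eq, sub_zero, abs_of_nonneg (hf0 j n)]
  exact (not_lt.1 fun h => hnB (hn h)).trans_lt hi

namespace Polynomial

lemma tendsto_eval_natCast_atTop {q : ℤ[X]} (hdeg : 0 < q.natDegree) (hq : 0 < q.leadingCoeff) :
    Tendsto (fun n : ℕ => q.eval (n : ℤ)) atTop atTop := by
  have hinj : Function.Injective (Int.castRingHom ℝ) := Int.cast_injective
  have hreal : Tendsto (fun x : ℝ => (q.map (Int.castRingHom ℝ)).eval x) atTop atTop :=
    tendsto_atTop_of_leadingCoeff_nonneg _
      (by rwa [degree_map_eq_of_injective hinj, ← natDegree_pos_iff_degree_pos])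
      (by simpa [leadingCoeff_map_of_injective hinj] using hq.le)
  rw [← tendsto_intCast_atTop_iff (R := ℝ)]
  simpa [Function.comp_def, eval_natCast_map] using hreal.comp tendsto_natCast_atTop_atTop

lemma leadingCoeff_pos_of_eval_nonneg {p : ℤ[X]} (hdeg : 0 < p.natDegree)
    (hp : ∀ n : ℕ, 0 < n → 0 ≤ p.eval (n : ℤ)) : 0 < p.leadingCoeff := by
  have hne : p.leadingCoeff ≠ 0 := leadingCoeff_ne_zero.2 (ne_zero_of_natDegree_gt hdeg)
  refine lt_of_le_of_ne (not_lt.1 fun hneg => ?_) hne.symm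
  have hnegp : Tendsto (fun n : ℕ => (-p).eval (n : ℤ)) atTop atTop :=
    tendsto_eval_natCast_atTop (by rwa [natDegree_neg]) (by rw [leadingCoeff_neg]; linarith)
  obtain ⟨n, hn, hpos⟩ := ((hnegp.eventually_gt_atTop 0).and (eventually_gt_atTop 0)).exists
  rw [eval_neg] at hn
  linarith [hp n hpos]

variable {R : Type*} [CommRing R]

lemma coeff_taylor_sub_taylor (q : R[X]) (a b : R) (k : ℕ) :
    (taylor a q - taylor b q).coeff k = (hasseDeriv k q).eval a - (hasseDeriv k q).eval b := by
  rw [coeff_sub, taylor_coeff, taylor_coeff]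

lemma coeff_taylor_sub_taylor_of_natDegree_le (q : R[X]) (a b : R) {k : ℕ}
    (hk : q.natDegree ≤ k) : (taylor a q - taylor b q).coeff k = 0 := by
  have hconst : (hasseDeriv k q).natDegree = 0 := by
    have := natDegree_hasseDeriv_le q k
    omega
  rw [coeff_taylor_sub_taylor, eq_C_of_natDegree_eq_zero hconst, eval_C, eval_C, sub_self]

lemma coeff_taylor_sub_taylor_natDegree_sub_one (q : R[X]) (a b : R) (hq : 0 < q.natDegree) :
    (taylor a q - taylor b q).coeff (q.natDegree - 1) = q.natDegree * q.leadingCoeff * (a - b) := by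
  have hlin : (hasseDeriv (q.natDegree - 1) q).natDegree ≤ 1 := by
    have := natDegree_hasseDeriv_le q (q.natDegree - 1)
    omega
  have hcoeff : (hasseDeriv (q.natDegree - 1) q).coeff 1 = q.natDegree * q.leadingCoeff := by
    rw [hasseDeriv_coeff, Nat.add_sub_cancel' hq,
      Nat.choose_symm_of_eq_add (Nat.sub_add_cancel hq).symm, Nat.choose_one_right, leadingCoeff]
  rw [coeff_taylor_sub_taylor, eq_X_add_C_of_natDegree_le_one hlin]
  simp only [eval_add, eval_mul, eval_C, eval_X, hcoeff]
  ring

lemma natDegree_taylor_sub_taylor {q : ℤ[X]} (hdeg : 0 < q.natDegree) (hq : 0 < q.leadingCoeff)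
    {a b : ℤ} (hab : b < a) :
    (taylor a q - taylor b q).natDegree = q.natDegree - 1 ∧
      0 < (taylor a q - taylor b q).leadingCoeff := by
  have hpos : 0 < (taylor a q - taylor b q).coeff (q.natDegree - 1) := by
    rw [coeff_taylor_sub_taylor_natDegree_sub_one q a b hdeg]
    have : (0 : ℤ) < q.natDegree := by exact_mod_cast hdeg
    have : 0 < a - b := sub_pos.2 hab
    positivity
  have hnat : (taylor a q - taylor b q).natDegree = q.natDegree - 1 :=
    natDegree_eq_of_le_of_coeff_ne_zero
      (natDegree_le_iff_coeff_eq_zero.2 fun k hk =>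
        coeff_taylor_sub_taylor_of_natDegree_le q a b (by omega)) hpos.ne'
  exact ⟨hnat, by rwa [leadingCoeff, hnat]⟩

end Polynomial

lemma norm_sum_Icc_add_sub_sum_Icc_le {E : Type*} [NormedAddCommGroup E] {w : ℕ → E} {W : ℝ}
    (hw : ∀ n, ‖w n‖ ≤ W) (N m : ℕ) :
    ‖∑ n ∈ Icc 1 N, w (n + m) - ∑ n ∈ Icc 1 N, w n‖ ≤ 2 * m * W := by
  induction m with
  | zero => simp
  | succ m ih =>
    have hstep : ‖∑ n ∈ Icc 1 N, w (n + (m + 1)) - ∑ n ∈ Icc 1 N, w (n + m)‖ ≤ W + W := by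
      have htele := sum_Icc_one_sub_sum_Icc_one (fun n => w (n + m)) N
      simp only [add_assoc, add_comm 1 m] at htele
      exact htele ▸ norm_sub_le_of_le (hw _) (hw _)
    calc ‖∑ n ∈ Icc 1 N, w (n + (m + 1)) - ∑ n ∈ Icc 1 N, w n‖
        = ‖(∑ n ∈ Icc 1 N, w (n + m) - ∑ n ∈ Icc 1 N, w n)
            + (∑ n ∈ Icc 1 N, w (n + (m + 1)) - ∑ n ∈ Icc 1 N, w (n + m))‖ := by
          rw [sub_add_sub_cancel']
      _ ≤ 2 * m * W + (W + W) := norm_add_le_of_le ih hstep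
      _ = 2 * ↑(m + 1) * W := by push_cast; ring

lemma mul_norm_sum_Icc_le_sum_norm_window (𝕜 : Type*) {E : Type*} [RCLike 𝕜] [NormedAddCommGroup E]
    [NormedSpace 𝕜 E] {w : ℕ → E} {W : ℝ} (hw : ∀ n, ‖w n‖ ≤ W) (N M : ℕ) :
    M * ‖∑ n ∈ Icc 1 N, w n‖ ≤ ∑ n ∈ Icc 1 N, ‖∑ m ∈ Icc 1 M, w (n + m)‖ + 2 * M ^ 2 * W := by
  have hwindow : ∑ n ∈ Icc 1 N, ∑ m ∈ Icc 1 M, w (n + m) - M • ∑ n ∈ Icc 1 N, w n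
      = ∑ m ∈ Icc 1 M, (∑ n ∈ Icc 1 N, w (n + m) - ∑ n ∈ Icc 1 N, w n) := by
    rw [sum_comm, sum_sub_distrib, sum_const, Nat.card_Icc, Nat.add_sub_cancel]
  have herr : ‖∑ m ∈ Icc 1 M, (∑ n ∈ Icc 1 N, w (n + m) - ∑ n ∈ Icc 1 N, w n)‖ ≤ 2 * M ^ 2 * W :=
    calc _ ≤ ∑ m ∈ Icc 1 M, 2 * (M : ℝ) * W := norm_sum_le_of_le _ fun m hm =>
          (norm_sum_Icc_add_sub_sum_Icc_le hw N m).trans <| by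
            have hW : 0 ≤ W := (norm_nonneg _).trans (hw 0)
            gcongr
            exact_mod_cast (mem_Icc.1 hm).2
      _ = 2 * M ^ 2 * W := by
        simp only [sum_const, Nat.card_Icc, Nat.add_sub_cancel, nsmul_eq_mul]
        ring
  calc (M : ℝ) * ‖∑ n ∈ Icc 1 N, w n‖ = ‖M • ∑ n ∈ Icc 1 N, w n‖ := by
        rw [RCLike.norm_nsmul 𝕜, nsmul_eq_mul]
    _ ≤ ‖∑ n ∈ Icc 1 N, ∑ m ∈ Icc 1 M, w (n + m)‖
          + ‖∑ n ∈ Icc 1 N, ∑ m ∈ Icc 1 M, w (n + m) - M • ∑ n ∈ Icc 1 N, w n‖ :=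
        norm_le_norm_add_norm_sub _ _
    _ ≤ _ := add_le_add (norm_sum_le _ _) (hwindow ▸ herr)

def CesaroWeaklyNull (𝕜 : Type*) {H : Type*} [RCLike 𝕜] [NormedAddCommGroup H]
    [InnerProductSpace 𝕜 H] (u : ℕ → H) : Prop :=
  ∀ y : H, CesaroNull (fun n => ‖⟪y, u n⟫_𝕜‖)

section VanDerCorput

variable {𝕜 H : Type*} [RCLike 𝕜] [NormedAddCommGroup H] [InnerProductSpace 𝕜 H]

lemma norm_sum_sq_le_sum_norm_sq_add_sum_erase {ι : Type*} [DecidableEq ι] (s : Finset ι)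
    (v : ι → H) :
    ‖∑ i ∈ s, v i‖ ^ 2 ≤ ∑ i ∈ s, ‖v i‖ ^ 2 + ∑ i ∈ s, ∑ j ∈ s.erase i, ‖⟪v i, v j⟫_𝕜‖ := by
  calc ‖∑ i ∈ s, v i‖ ^ 2 ≤ ∑ i ∈ s, ∑ j ∈ s, ‖⟪v i, v j⟫_𝕜‖ := by
        rw [@norm_sq_eq_re_inner 𝕜, sum_inner]
        simp_rw [inner_sum]
        exact (RCLike.re_le_norm _).trans
          ((norm_sum_le _ _).trans (sum_le_sum fun i _ => norm_sum_le _ _))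
    _ = ∑ i ∈ s, (‖⟪v i, v i⟫_𝕜‖ + ∑ j ∈ s.erase i, ‖⟪v i, v j⟫_𝕜‖) :=
        sum_congr rfl fun i hi => (add_sum_erase _ _ hi).symm
    _ ≤ ∑ i ∈ s, (‖v i‖ ^ 2 + ∑ j ∈ s.erase i, ‖⟪v i, v j⟫_𝕜‖) := by
        gcongr with i
        exact (norm_inner_le_norm _ _).trans_eq (sq _).symm
    _ = _ := sum_add_distrib

lemma sq_mul_norm_sum_Icc_le {w : ℕ → H} {W : ℝ} (hw : ∀ n, ‖w n‖ ≤ W) (N M : ℕ) :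
    (M * ‖∑ n ∈ Icc 1 N, w n‖) ^ 2 ≤ 2 * N * (N * M * W ^ 2
      + ∑ n ∈ Icc 1 N, ∑ m ∈ Icc 1 M, ∑ m' ∈ (Icc 1 M).erase m, ‖⟪w (n + m), w (n + m')⟫_𝕜‖)
      + 8 * M ^ 4 * W ^ 2 := by
  set A := ∑ n ∈ Icc 1 N, ‖∑ m ∈ Icc 1 M, w (n + m)‖
  have hW : 0 ≤ W := (norm_nonneg _).trans (hw 0)
  have hwindow : ∀ n, ‖∑ m ∈ Icc 1 M, w (n + m)‖ ^ 2 ≤ M * W ^ 2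
      + ∑ m ∈ Icc 1 M, ∑ m' ∈ (Icc 1 M).erase m, ‖⟪w (n + m), w (n + m')⟫_𝕜‖ := fun n => by
    refine (norm_sum_sq_le_sum_norm_sq_add_sum_erase (𝕜 := 𝕜) _ _).trans ?_
    gcongr
    calc ∑ m ∈ Icc 1 M, ‖w (n + m)‖ ^ 2 ≤ ∑ m ∈ Icc 1 M, W ^ 2 := by gcongr; exact hw _
      _ = M * W ^ 2 := by simp
  calc (M * ‖∑ n ∈ Icc 1 N, w n‖) ^ 2 ≤ (A + 2 * M ^ 2 * W) ^ 2 := by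
        gcongr
        exact mul_norm_sum_Icc_le_sum_norm_window 𝕜 hw N M
    _ ≤ 2 * A ^ 2 + 8 * M ^ 4 * W ^ 2 := by nlinarith [sq_nonneg (A - 2 * M ^ 2 * W)]
    _ ≤ 2 * (N * ∑ n ∈ Icc 1 N, ‖∑ m ∈ Icc 1 M, w (n + m)‖ ^ 2) + 8 * M ^ 4 * W ^ 2 := by
        gcongr
        simpa using sq_sum_le_card_mul_sum_sq (s := Icc 1 N)
    _ ≤ _ := by
        grw [sum_le_sum fun n _ => hwindow n, sum_add_distrib]
        simp only [sum_const, Nat.card_Icc, Nat.add_sub_cancel, nsmul_eq_mul]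
        exact le_of_eq (by ring)

theorem isLittleO_sum_of_cesaroNull_norm_inner {w : ℕ → H} {W : ℝ} (hw : ∀ n, ‖w n‖ ≤ W)
    (hcorr : ∀ m m', m' < m → CesaroNull (fun n => ‖⟪w (n + m), w (n + m')⟫_𝕜‖)) :
    (fun N : ℕ => ∑ n ∈ Icc 1 N, w n) =o[atTop] (fun N : ℕ => (N : ℝ)) := by
  refine IsLittleO.of_bound fun ε hε => ?_
  -- The window length `M` makes the diagonal contribution `W ^ 2 / M` small.
  obtain ⟨M, hM⟩ := exists_nat_gt (6 * W ^ 2 / ε ^ 2)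
  have hMpos : (0 : ℝ) < M := lt_of_le_of_lt (by positivity) hM
  have hMW : 6 * W ^ 2 ≤ ε ^ 2 * M := by
    rw [div_lt_iff₀ (by positivity)] at hM
    linarith
  have hoff : CesaroNull fun n =>
      ∑ m ∈ Icc 1 M, ∑ m' ∈ (Icc 1 M).erase m, ‖⟪w (n + m), w (n + m')⟫_𝕜‖ :=
    CesaroNull.sum fun m _ => CesaroNull.sum fun m' hm' => by
      rcases (ne_of_mem_erase hm').lt_or_gt with h | h
      · exact hcorr m m' h
      · simpa only [norm_inner_symm] using hcorr m' m h
  have hN2 : Tendsto (fun N : ℕ => (N : ℝ) ^ 2) atTop atTop :=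
    (tendsto_pow_atTop two_ne_zero).comp tendsto_natCast_atTop_atTop
  filter_upwards [hoff.eventually_sum_le (show 0 < ε ^ 2 * M ^ 2 / 6 by positivity),
    hN2.eventually_ge_atTop (24 * M ^ 2 * W ^ 2 / ε ^ 2)] with N hoffN hN
  rw [div_le_iff₀ (by positivity)] at hN
  have hsq : (M * ‖∑ n ∈ Icc 1 N, w n‖) ^ 2 ≤ (M * (ε * N)) ^ 2 :=
    calc _ ≤ 2 * N * (N * M * W ^ 2 + ε ^ 2 * M ^ 2 / 6 * N) + 8 * M ^ 4 * W ^ 2 :=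
          (sq_mul_norm_sum_Icc_le hw N M).trans (by gcongr)
      _ = N ^ 2 * M * (2 * W ^ 2) + ε ^ 2 * M ^ 2 * N ^ 2 / 3 + M ^ 2 * (8 * M ^ 2 * W ^ 2) := by
          ring
      _ ≤ N ^ 2 * M * (ε ^ 2 * M / 3) + ε ^ 2 * M ^ 2 * N ^ 2 / 3
            + M ^ 2 * (ε ^ 2 * N ^ 2 / 3) := by
          gcongr <;> linarith
      _ = (M * (ε * N)) ^ 2 := by ring
  rw [Real.norm_natCast]
  exact le_of_mul_le_mul_left (le_of_pow_le_pow_left₀ two_ne_zero (by positivity) hsq) hMpos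

theorem CesaroWeaklyNull.of_cesaroNull_norm_inner_shift {v : ℕ → H} {C : ℝ}
    (hv : ∀ n, ‖v n‖ ≤ C)
    (hcorr : ∀ m m', m' < m → CesaroNull (fun n => ‖⟪v (n + m), v (n + m')⟫_𝕜‖)) :
    CesaroWeaklyNull 𝕜 v := by
  intro y
  set c : ℕ → 𝕜 := fun n => ⟪y, v n⟫_𝕜
  -- Weighting `v n` by `conj (c n)` turns `⟪y, ∑ w n⟫` into `∑ ‖c n‖ ^ 2`.
  set w : ℕ → H := fun n => starRingEnd 𝕜 (c n) • v n
  have hc : ∀ n, ‖c n‖ ≤ ‖y‖ * C := fun n =>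
    (norm_inner_le_norm _ _).trans (mul_le_mul_of_nonneg_left (hv n) (norm_nonneg y))
  have hw : ∀ n, ‖w n‖ ≤ ‖y‖ * C * C := fun n => by
    simp only [w, norm_smul, RCLike.norm_conj]
    exact mul_le_mul (hc n) (hv n) (norm_nonneg _) ((norm_nonneg _).trans (hc n))
  have hwcorr : ∀ m m', m' < m → CesaroNull (fun n => ‖⟪w (n + m), w (n + m')⟫_𝕜‖) :=
    fun m m' h => ((hcorr m m' h).const_mul ((‖y‖ * C) ^ 2)).mono (fun n => norm_nonneg _)
      fun n => by
        simp only [w, inner_smul_left, inner_smul_right, norm_mul, RCLike.norm_conj]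
        calc ‖c (n + m')‖ * (‖c (n + m)‖ * ‖⟪v (n + m), v (n + m')⟫_𝕜‖)
            ≤ (‖y‖ * C) * ((‖y‖ * C) * ‖⟪v (n + m), v (n + m')⟫_𝕜‖) := by
              gcongr
              · exact (norm_nonneg _).trans (hc n)
              · exact hc _
              · exact hc _
          _ = (‖y‖ * C) ^ 2 * ‖⟪v (n + m), v (n + m')⟫_𝕜‖ := by ring
  have hsq : CesaroNull (fun n => ‖c n‖ ^ 2) := by
    refine (IsBigO.of_bound ‖y‖ (Eventually.of_forall fun N => ?_)).trans_isLittleO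
      (isLittleO_sum_of_cesaroNull_norm_inner hw hwcorr)
    have hinner : ⟪y, ∑ n ∈ Icc 1 N, w n⟫_𝕜 = ((∑ n ∈ Icc 1 N, ‖c n‖ ^ 2 : ℝ) : 𝕜) := by
      rw [inner_sum]
      push_cast
      exact sum_congr rfl fun n _ => by rw [inner_smul_right, RCLike.conj_mul]
    calc ‖∑ n ∈ Icc 1 N, ‖c n‖ ^ 2‖ = ‖⟪y, ∑ n ∈ Icc 1 N, w n⟫_𝕜‖ := by
          rw [hinner, RCLike.norm_ofReal, Real.norm_eq_abs]
      _ ≤ ‖y‖ * ‖∑ n ∈ Icc 1 N, w n‖ := norm_inner_le_norm _ _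
  exact CesaroNull.of_sq (fun n => norm_nonneg _) hsq

end VanDerCorput

lemma norm_pow_apply_of_forall_norm_eq {R E : Type*} [Semiring R] [SeminormedAddCommGroup E]
    [Module R E] {U : E →L[R] E} (hU : ∀ x, ‖U x‖ = ‖x‖) (n : ℕ) (x : E) :
    ‖(U ^ n) x‖ = ‖x‖ := by
  induction n generalizing x with
  | zero => simp
  | succ n ih => rw [pow_succ, mul_apply_eq_comp, ih, hU]

section PolynomialIterates

variable {𝕜 H : Type*} [RCLike 𝕜] [NormedAddCommGroup H] [InnerProductSpace 𝕜 H]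
  {U : H →L[𝕜] H}

lemma inner_pow_apply_pow_add_apply (hU : ∀ x, ‖U x‖ = ‖x‖) (s t : ℕ) (x y : H) :
    ⟪(U ^ s) y, (U ^ (s + t)) x⟫_𝕜 = ⟪y, (U ^ t) x⟫_𝕜 := by
  let V : H →ₗᵢ[𝕜] H := ⟨(U ^ s : H →L[𝕜] H), norm_pow_apply_of_forall_norm_eq hU s⟩
  rw [pow_add, mul_apply_eq_comp]
  exact V.inner_map_map y ((U ^ t) x)

lemma cesaroWeaklyNull_pow_eval_of_natDegree_eq_one (hU : ∀ x, ‖U x‖ = ‖x‖)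
    (hmix : ∀ x, CesaroWeaklyNull 𝕜 (fun n => (U ^ n) x)) {q : ℤ[X]} (hdeg : q.natDegree = 1)
    (hq : 0 < q.leadingCoeff) (x : H) :
    CesaroWeaklyNull 𝕜 (fun n : ℕ => (U ^ (q.eval (n : ℤ)).toNat) x) := by
  intro y
  set b := q.coeff 0
  have heval : ∀ n : ℕ, q.eval (n : ℤ) = q.leadingCoeff * n + b := fun n => by
    conv_lhs => rw [eq_X_add_C_of_natDegree_le_one hdeg.le]
    simp [leadingCoeff, hdeg, b]
  -- With `b = b⁺ - b⁻`, move `U ^ b⁻` onto `y` and `U ^ b⁺` onto `x`.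
  refine ((hmix ((U ^ b.toNat) x) ((U ^ (-b).toNat) y)).comp_mul (fun _ => norm_nonneg _)
    (Int.lt_toNat.2 hq)).congr' ?_
  filter_upwards [eventually_ge_atTop b.natAbs] with n hn
  have hlin : ((q.leadingCoeff.toNat * n : ℕ) : ℤ) = q.leadingCoeff * n := by
    push_cast
    rw [Int.toNat_of_nonneg hq.le]
  have hn' : (n : ℤ) ≤ q.leadingCoeff * n := le_mul_of_one_le_left (by positivity) hq
  have hexp : q.leadingCoeff.toNat * n + b.toNat = (-b).toNat + (q.eval (n : ℤ)).toNat := by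
    rw [heval]
    omega
  change ‖⟪y, (U ^ (q.eval (n : ℤ)).toNat) x⟫_𝕜‖
    = ‖⟪(U ^ (-b).toNat) y, (U ^ (q.leadingCoeff.toNat * n)) ((U ^ b.toNat) x)⟫_𝕜‖
  rw [← mul_apply_eq_comp, ← pow_add, hexp, inner_pow_apply_pow_add_apply hU]

lemma cesaroWeaklyNull_pow_eval_of_forall_natDegree_lt (hU : ∀ x, ‖U x‖ = ‖x‖) {q : ℤ[X]}
    (hdeg : 1 < q.natDegree) (hq : 0 < q.leadingCoeff)
    (ih : ∀ r : ℤ[X], 0 < r.natDegree → r.natDegree < q.natDegree → 0 < r.leadingCoeff →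
      ∀ x, CesaroWeaklyNull 𝕜 (fun n : ℕ => (U ^ (r.eval (n : ℤ)).toNat) x))
    (x : H) : CesaroWeaklyNull 𝕜 (fun n : ℕ => (U ^ (q.eval (n : ℤ)).toNat) x) := by
  refine CesaroWeaklyNull.of_cesaroNull_norm_inner_shift
    (fun n => (norm_pow_apply_of_forall_norm_eq hU _ x).le) fun m m' hmm' => ?_
  obtain ⟨hr, hrlc⟩ := natDegree_taylor_sub_taylor (by omega) hq (Nat.cast_lt.2 hmm')
  set r := taylor (m : ℤ) q - taylor (m' : ℤ) q
  have hrdeg : 0 < r.natDegree := by omega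
  refine (ih r hrdeg (by omega) hrlc x x).congr' ?_
  have hq_shift := (tendsto_add_atTop_iff_nat m').2 (tendsto_eval_natCast_atTop (by omega) hq)
  filter_upwards [hq_shift.eventually_ge_atTop 0,
    (tendsto_eval_natCast_atTop hrdeg hrlc).eventually_ge_atTop 0] with n hqn hrn
  have hsplit : q.eval ((n + m : ℕ) : ℤ) = q.eval ((n + m' : ℕ) : ℤ) + r.eval (n : ℤ) := by
    simp only [r, eval_sub, taylor_eval]
    push_cast
    ring
  have hexp : (q.eval ((n + m : ℕ) : ℤ)).toNat
      = (q.eval ((n + m' : ℕ) : ℤ)).toNat + (r.eval (n : ℤ)).toNat := by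
    omega
  change ‖⟪(U ^ (q.eval ((n + m : ℕ) : ℤ)).toNat) x, (U ^ (q.eval ((n + m' : ℕ) : ℤ)).toNat) x⟫_𝕜‖
    = ‖⟪x, (U ^ (r.eval (n : ℤ)).toNat) x⟫_𝕜‖
  rw [hexp, norm_inner_symm, inner_pow_apply_pow_add_apply hU]

theorem cesaroWeaklyNull_pow_eval (hU : ∀ x, ‖U x‖ = ‖x‖)
    (hmix : ∀ x, CesaroWeaklyNull 𝕜 (fun n => (U ^ n) x)) {q : ℤ[X]} (hdeg : 0 < q.natDegree)
    (hq : 0 < q.leadingCoeff) (x : H) :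
    CesaroWeaklyNull 𝕜 (fun n : ℕ => (U ^ (q.eval (n : ℤ)).toNat) x) := by
  induction hD : q.natDegree using Nat.strong_induction_on generalizing q x with
  | _ D ih =>
    obtain rfl | hD1 : D = 1 ∨ 1 < D := by omega
    · exact cesaroWeaklyNull_pow_eval_of_natDegree_eq_one hU hmix hD hq x
    · subst hD
      exact cesaroWeaklyNull_pow_eval_of_forall_natDegree_lt hU hD1 hq
        (fun r hr hrq hrlc x => ih _ hrq hr hrlc x rfl) x

end PolynomialIterates

def AlmostWeaklyStable (𝕜 : Type*) {H : Type*} [RCLike 𝕜] [NormedAddCommGroup H]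
    [InnerProductSpace 𝕜 H] (u : ℕ → H) : Prop :=
  ∃ S : Set ℕ, HasDensity S 1 ∧ ∀ y : H, Tendsto (fun n => ⟪y, u n⟫_𝕜) (atTop ⊓ 𝓟 S) (𝓝 0)

section AlmostWeaklyStable

variable {𝕜 H : Type*} [RCLike 𝕜] [NormedAddCommGroup H] [InnerProductSpace 𝕜 H]

lemma AlmostWeaklyStable.cesaroWeaklyNull {u : ℕ → H} {C : ℝ} (hu : AlmostWeaklyStable 𝕜 u)
    (hC : ∀ n, ‖u n‖ ≤ C) : CesaroWeaklyNull 𝕜 u := by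
  obtain ⟨S, hS, hlim⟩ := hu
  exact fun y => hS.cesaroNull_of_tendsto (fun n => norm_nonneg _)
    (fun n => (norm_inner_le_norm y (u n)).trans (mul_le_mul_of_nonneg_left (hC n) (norm_nonneg y)))
    (by simpa using (hlim y).norm)

lemma isClosed_setOf_tendsto_inner {ι : Type*} {u : ι → H} {C : ℝ} (hC : ∀ i, ‖u i‖ ≤ C)
    (l : Filter ι) : IsClosed {y : H | Tendsto (fun i => ⟪y, u i⟫_𝕜) l (𝓝 0)} := by
  refine Equicontinuous.isClosed_setOfPred_tendsto (F := fun i y => ⟪y, u i⟫_𝕜) (f := fun _ => 0)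
    ?_ continuous_const
  refine (LipschitzWith.uniformEquicontinuous _ C.toNNReal fun i =>
    LipschitzWith.of_dist_le_mul fun y y' => ?_).equicontinuous
  rw [dist_eq_norm, dist_eq_norm, ← inner_sub_left, Real.coe_toNNReal', mul_comm]
  exact (norm_inner_le_norm _ _).trans
    (mul_le_mul_of_nonneg_left ((hC i).trans (le_max_left _ _)) (norm_nonneg _))

theorem CesaroWeaklyNull.almostWeaklyStable [CompleteSpace H] {u : ℕ → H} {C : ℝ}
    (hu : CesaroWeaklyNull 𝕜 u) (hC : ∀ n, ‖u n‖ ≤ C) : AlmostWeaklyStable 𝕜 u := by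
  obtain ⟨S, hS, hlim⟩ := exists_hasDensity_one_forall_tendsto (fun j n => ‖⟪u j, u n⟫_𝕜‖)
    (fun _ _ => norm_nonneg _) fun j => hu (u j)
  refine ⟨S, hS, fun y => ?_⟩
  set K := (Submodule.span 𝕜 (Set.range u)).topologicalClosure
  have hK : (K : Set H) ⊆ {z | Tendsto (fun n => ⟪z, u n⟫_𝕜) (atTop ⊓ 𝓟 S) (𝓝 0)} := by
    refine closure_minimal (fun z hz => ?_) (isClosed_setOf_tendsto_inner hC _)
    induction hz using Submodule.span_induction with
    | mem z hz =>
      obtain ⟨j, rfl⟩ := hz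
      exact tendsto_zero_iff_norm_tendsto_zero.2 (hlim j)
    | zero => simpa using tendsto_const_nhds
    | add a b _ _ ha hb => simpa [inner_add_left] using ha.add hb
    | smul c z _ hz => simpa [inner_smul_left] using hz.const_mul _
  -- The component of `y` orthogonal to all the `u n` does not contribute.
  obtain ⟨z, hzK, z', hz', rfl⟩ := K.exists_add_mem_mem_orthogonal y
  have hperp : ∀ n, ⟪z', u n⟫_𝕜 = 0 := fun n => Submodule.inner_left_of_mem_orthogonal
    (Submodule.le_topologicalClosure _ (Submodule.subset_span (Set.mem_range_self n))) hz'
  simpa [inner_add_left, hperp] using hK hzK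

end AlmostWeaklyStable

theorem stmt8_general {H : Type*} [NormedAddCommGroup H] [InnerProductSpace ℂ H] [CompleteSpace H]
    (U : H →L[ℂ] H) (hiso : ∀ x : H, ‖U x‖ = ‖x‖)
    (haws : ∀ x : H, ∃ S : Set ℕ, HasDensity S 1 ∧
      ∀ y : H, Tendsto (fun n : ℕ => ⟪y, (U ^ n) x⟫_ℂ) (atTop ⊓ Filter.principal S) (nhds 0))
    (p : Polynomial ℤ) (hdeg : 0 < p.natDegree)
    (hp : ∀ n : ℕ, 0 < n → 0 ≤ p.eval (n : ℤ)) :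
    ∀ h : H, ∃ S : Set ℕ, HasDensity S 1 ∧
      ∀ y : H, Tendsto (fun n : ℕ => ⟪y, (U ^ (p.eval (n : ℤ)).toNat) h⟫_ℂ)
        (atTop ⊓ Filter.principal S) (nhds 0) := by
  have hbdd : ∀ (k : ℕ → ℕ) (x : H) (n : ℕ), ‖(U ^ k n) x‖ ≤ ‖x‖ :=
    fun k x n => (norm_pow_apply_of_forall_norm_eq hiso _ x).le
  have hmix : ∀ x, CesaroWeaklyNull ℂ (fun n => (U ^ n) x) :=
    fun x => AlmostWeaklyStable.cesaroWeaklyNull (haws x) (hbdd id x)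
  exact fun h => (cesaroWeaklyNull_pow_eval hiso hmix hdeg
    (leadingCoeff_pos_of_eval_nonneg hdeg hp) h).almostWeaklyStable (hbdd _ h)

/-- If `U` is an almost weakly stable unitary operator on a Hilbert space, then for every
`h` and every nonconstant polynomial `p ∈ ℤ[X]` with `p(ℕ⁺) ⊆ ℕ`, the sequence
`(U^{p(n)} h)` is almost weakly stable. -/
theorem stmt8 {H : Type*} [NormedAddCommGroup H] [InnerProductSpace ℂ H] [CompleteSpace H]
    (U : H →L[ℂ] H) (hiso : ∀ x : H, ‖U x‖ = ‖x‖) (hsurj : Function.Surjective U)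
    (haws : ∀ x : H, ∃ S : Set ℕ, HasDensity S 1 ∧
      ∀ y : H, Tendsto (fun n : ℕ => ⟪y, (U ^ n) x⟫_ℂ) (atTop ⊓ Filter.principal S) (nhds 0))
    (p : Polynomial ℤ) (hdeg : 0 < p.natDegree)
    (hp : ∀ n : ℕ, 0 < n → 0 ≤ p.eval (n : ℤ)) :
    ∀ h : H, ∃ S : Set ℕ, HasDensity S 1 ∧
      ∀ y : H, Tendsto (fun n : ℕ => ⟪y, (U ^ (p.eval (n : ℤ)).toNat) h⟫_ℂ)
        (atTop ⊓ Filter.principal S) (nhds 0) :=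
  stmt8_general U hiso haws p hdeg hp
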